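/- Under the same assumptions (s > 2r + d, p > r, λ_k ≥ L_*|k|^p for |k| > K), the column sums of the Jacobian of the nonlinearity satisfy ∑_{i ≠ k} |∂N_i/∂u_k| ≤ C̃₂ |k|^r for all k, uniformly on W_P(C,s); hence there exists l ∈ ℝ with μ₁(DF^n(u)) ≤ l for all Galerkin truncations n and all u ∈ W_P(C,s), where μ₁(A) = max_k ( a_{kk} + ∑_{i≠k} |a_{ik}| ) is the logarithmic norm for the ℓ¹ norm. -/
import Mathlib


open Filter
open scoped BigOperators Topology

noncomputable def znorm {d : ℕ} (k : Fin d → ℤ) : ℝ := ‖(fun i => (k i : ℝ) : Fin d → ℝ)‖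

/-- The modified norm on `ℤ^d`: the norm of `k` for `k ≠ 0`, and `|0| := 1`. -/
noncomputable def mnorm {d : ℕ} (k : Fin d → ℤ) : ℝ := if k = 0 then 1 else znorm k

lemma one_le_mnorm {d : ℕ} (k : Fin d → ℤ) : 1 ≤ mnorm k := by
  unfold mnorm
  split_ifs with h
  · exact le_refl 1
  · obtain ⟨j, hj⟩ : ∃ j, k j ≠ 0 := by
      by_contra hc
      push_neg at hc
      exact h (funext hc)
    have h1 : (1 : ℝ) ≤ |(k j : ℝ)| := by
      have : (1 : ℤ) ≤ |k j| := Int.one_le_abs hj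
      calc (1:ℝ) ≤ (|k j| : ℤ) := by exact_mod_cast this
        _ = |(k j : ℝ)| := by push_cast; ring
    calc (1:ℝ) ≤ |(k j : ℝ)| := h1
      _ = ‖(k j : ℝ)‖ := (Real.norm_eq_abs _).symm
      _ ≤ znorm k := norm_le_pi_norm (fun i => (k i : ℝ)) j

lemma mnorm_pos {d : ℕ} (k : Fin d → ℤ) : 0 < mnorm k :=
  lt_of_lt_of_le one_pos (one_le_mnorm k)

lemma coord_le_mnorm {d : ℕ} (k : Fin d → ℤ) (j : Fin d) :
    (|k j| : ℝ) ⊔ 1 ≤ mnorm k := by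
  rcases eq_or_ne k 0 with h | h
  · subst h; simp [mnorm]
  · rw [mnorm, if_neg h]
    refine sup_le ?_ ?_
    · have := norm_le_pi_norm (fun i => (k i : ℝ)) j
      rw [Real.norm_eq_abs] at this
      exact this
    · have := one_le_mnorm k
      rwa [mnorm, if_neg h] at this

lemma gsummable {t : ℝ} (ht : 1 < t) :
    Summable (fun n : ℤ => ((|n| : ℝ) ⊔ 1) ^ (-t)) := by
  have h1 : Summable (fun n : ℤ => |(n : ℝ)| ^ (-t)) := Real.summable_abs_int_rpow ht
  have h2 : Summable (fun n : ℤ => if n = 0 then (1:ℝ) else 0) :=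
    summable_of_ne_finset_zero (s := {0}) (fun n hn => by
      simp only [Finset.mem_singleton] at hn; simp [hn])
  refine (h1.add h2).congr fun n => ?_
  rcases eq_or_ne n 0 with h | h
  · subst h
    simp [Real.zero_rpow (by linarith : -t ≠ 0)]
  · have hn1 : (1:ℝ) ≤ (|n| : ℝ) := by
      exact_mod_cast Int.one_le_abs h
    rw [if_neg h, add_zero, sup_of_le_left hn1]

lemma pisummable {d : ℕ} {g : ℤ → ℝ} (hg : Summable g) (hg0 : ∀ n, 0 ≤ g n) :
    Summable (fun m : Fin d → ℤ => ∏ i, g (m i)) := by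
  induction d with
  | zero => exact .of_finite
  | succ d ih =>
    have hmul : Summable (fun p : ℤ × (Fin d → ℤ) => g p.1 * ∏ i, g (p.2 i)) := by
      apply Summable.mul_of_nonneg hg ih
      · exact Pi.le_def.mpr hg0
      · exact Pi.le_def.mpr fun m => Finset.prod_nonneg fun i _ => hg0 _
    have key := ((Fin.consEquiv fun _ : Fin (d + 1) => ℤ).summable_iff
      (f := fun m : Fin (d + 1) → ℤ => ∏ i, g (m i)))
    refine key.mp (hmul.congr fun p => ?_)
    simp only [Function.comp_apply, Fin.consEquiv_apply]
    rw [Fin.prod_univ_succ]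
    simp

lemma mnorm_summable {d : ℕ} (hd : 1 ≤ d) {σ : ℝ} (hσ : (d : ℝ) < σ) :
    Summable (fun m : Fin d → ℤ => mnorm m ^ (-σ)) := by
  have hd0 : (0:ℝ) < d := by exact_mod_cast hd
  have ht : 1 < σ / d := (one_lt_div hd0).mpr hσ
  have hsum := pisummable (d := d) (gsummable ht)
    (fun n => Real.rpow_nonneg (le_trans zero_le_one le_sup_right) _)
  refine hsum.of_nonneg_of_le
    (fun m => Real.rpow_nonneg (mnorm_pos m).le _) (fun m => ?_)
  have hmp := mnorm_pos m
  have key : mnorm m ^ σ = ∏ i : Fin d, mnorm m ^ (σ / d) := by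
    rw [Finset.prod_const, ← Real.rpow_natCast (mnorm m ^ (σ / d)),
      ← Real.rpow_mul hmp.le, Finset.card_univ, Fintype.card_fin,
      div_mul_cancel₀ _ (ne_of_gt hd0)]
  have hprod_le : ∏ i : Fin d, ((|m i| : ℝ) ⊔ 1) ^ (σ / d) ≤ mnorm m ^ σ := by
    rw [key]
    refine Finset.prod_le_prod (fun i _ => Real.rpow_nonneg
      (le_trans zero_le_one le_sup_right) _) (fun i _ => ?_)
    exact Real.rpow_le_rpow (le_trans zero_le_one le_sup_right)
      (coord_le_mnorm m i) (by positivity)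
  have hprod_pos : 0 < ∏ i : Fin d, ((|m i| : ℝ) ⊔ 1) ^ (σ / d) :=
    Finset.prod_pos fun i _ => Real.rpow_pos_of_pos
      (lt_of_lt_of_le one_pos le_sup_right) _
  calc mnorm m ^ (-σ) = (mnorm m ^ σ)⁻¹ := Real.rpow_neg hmp.le σ
    _ ≤ (∏ i : Fin d, ((|m i| : ℝ) ⊔ 1) ^ (σ / d))⁻¹ :=
        inv_anti₀ hprod_pos hprod_le
    _ = ∏ i : Fin d, ((|m i| : ℝ) ⊔ 1) ^ (-(σ / d)) := by
        rw [← Finset.prod_inv_distrib]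
        exact Finset.prod_congr rfl fun i _ =>
          (Real.rpow_neg (le_trans zero_le_one le_sup_right) _).symm

/-- Column estimates for the Jacobian of `F(u)_k = -λ_k u_k + N_k(u)` on `W_P(C,s)` with
`s > 2r + d`, `p > r`, `λ_k ≥ L_* |k|^p` for `|k| > K`.  If a matrix `a` satisfies the
derivative bounds `|a i k| ≤ D₁|k|^r/|i-k|^{s-r}` (`i ≠ k`) and
`a k k ≤ -λ_k + D₁|k|^r`, then the off-diagonal column sums satisfy
`∑_{i≠k} |a i k| ≤ C̃₂ |k|^r`, and there is `l ∈ ℝ` bounding every column quantity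
`a_kk + ∑_{i≠k}|a_ik|`, hence bounding the `ℓ¹` logarithmic norm
`μ₁(DF^n(u)) = max_k (a_kk + ∑_{i≠k}|a_ik|)` of every Galerkin truncation, uniformly
in `n` and `u ∈ W_P(C,s)`. -/
theorem stmt18 {d r : ℕ} (hd : 1 ≤ d) (s p K Ls D₁ : ℝ)
    (hs : 2 * (r : ℝ) + d < s) (hp : (r : ℝ) < p) (hLs : 0 < Ls) (hD₁ : 0 < D₁)
    (lam : (Fin d → ℤ) → ℝ)
    (hlam : ∀ k : Fin d → ℤ, K < znorm k → Ls * znorm k ^ p ≤ lam k) :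
    ∃ Ct₂ : ℝ, 0 < Ct₂ ∧ ∃ l : ℝ,
      ∀ a : (Fin d → ℤ) → (Fin d → ℤ) → ℝ,
        (∀ i k : Fin d → ℤ, i ≠ k →
          |a i k| ≤ D₁ * mnorm k ^ (r : ℝ) / mnorm (i - k) ^ (s - r)) →
        (∀ k : Fin d → ℤ, a k k ≤ -lam k + D₁ * mnorm k ^ (r : ℝ)) →
        (∀ k : Fin d → ℤ,
          Summable (fun i : Fin d → ℤ => if i = k then 0 else |a i k|) ∧
          (∑' i : Fin d → ℤ, if i = k then 0 else |a i k|) ≤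
            Ct₂ * mnorm k ^ (r : ℝ)) ∧
        (∀ k : Fin d → ℤ,
          a k k + (∑' i : Fin d → ℤ, if i = k then 0 else |a i k|) ≤ l) := by
  have hr0 : (0:ℝ) ≤ (r:ℝ) := Nat.cast_nonneg r
  have hp0 : (0:ℝ) < p := lt_of_le_of_lt hr0 hp
  have hσd : (d:ℝ) < s - r := by linarith
  have hF : Summable (fun m : Fin d → ℤ => mnorm m ^ (-(s - r))) := mnorm_summable hd hσd
  set S := ∑' m : Fin d → ℤ, mnorm m ^ (-(s - r)) with hSdef
  have hS1 : (1:ℝ) ≤ S := by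
    have h0 : mnorm (0 : Fin d → ℤ) ^ (-(s - r)) = 1 := by
      simp [mnorm]
    calc (1:ℝ) = mnorm (0 : Fin d → ℤ) ^ (-(s - r)) := h0.symm
      _ ≤ S := Summable.le_tsum hF 0 (fun i _ => Real.rpow_nonneg (mnorm_pos i).le _)
  have hSpos : (0:ℝ) < S := lt_of_lt_of_le one_pos hS1
  refine ⟨D₁ * S, mul_pos hD₁ hSpos, ?_⟩
  set C := D₁ + D₁ * S with hCdef
  have hCpos : (0:ℝ) < C := by positivity
  set T := max 1 ((C / Ls) ^ (1 / (p - (r:ℝ)))) with hTdef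
  have hT1 : (1:ℝ) ≤ T := le_max_left _ _
  -- finiteness of the small-frequency set
  have hfin : {k : Fin d → ℤ | znorm k ≤ K}.Finite := by
    have hA : {n : ℤ | (|n| : ℝ) ≤ K}.Finite := by
      refine (Finset.Icc (-⌈K⌉) ⌈K⌉).finite_toSet.subset ?_
      intro n hn
      simp only [Set.mem_setOf_eq] at hn
      have h1 : (|n| : ℝ) ≤ (⌈K⌉ : ℝ) := hn.trans (Int.le_ceil K)
      have h2 : |n| ≤ ⌈K⌉ := by exact_mod_cast h1
      simp only [Finset.coe_Icc, Set.mem_Icc]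
      exact abs_le.mp h2
    refine (Set.Finite.pi fun _ : Fin d => hA).subset ?_
    intro k hk
    simp only [Set.mem_setOf_eq] at hk
    intro i _
    have h1 : |((k i : ℝ))| ≤ znorm k := by
      have := norm_le_pi_norm (fun j => (k j : ℝ)) i
      rwa [Real.norm_eq_abs] at this
    exact h1.trans hk
  obtain ⟨M, hM⟩ : ∃ M, ∀ k : Fin d → ℤ, znorm k ≤ K →
      -lam k + C * mnorm k ^ (r:ℝ) ≤ M := by
    obtain ⟨M, hM⟩ := (hfin.image fun k => -lam k + C * mnorm k ^ (r:ℝ)).bddAbove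
    exact ⟨M, fun k hk => hM (Set.mem_image_of_mem _ hk)⟩
  refine ⟨max M (max C (C * T ^ (r:ℝ))), ?_⟩
  intro a ha hdiag
  have hcol : ∀ k : Fin d → ℤ,
      Summable (fun i : Fin d → ℤ => if i = k then 0 else |a i k|) ∧
      (∑' i : Fin d → ℤ, if i = k then 0 else |a i k|) ≤ D₁ * S * mnorm k ^ (r:ℝ) := by
    intro k
    set c := D₁ * mnorm k ^ (r:ℝ) with hcdef
    have hc0 : 0 ≤ c := mul_nonneg hD₁.le (Real.rpow_nonneg (mnorm_pos k).le _)
    have hdomsum : Summable (fun i : Fin d → ℤ => c * mnorm (i - k) ^ (-(s - r))) := by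
      have := ((Equiv.subRight k).summable_iff
        (f := fun m : Fin d → ℤ => mnorm m ^ (-(s - r)))).mpr hF
      exact this.mul_left c
    have hle : ∀ i : Fin d → ℤ, (if i = k then 0 else |a i k|) ≤
        c * mnorm (i - k) ^ (-(s - r)) := by
      intro i
      rcases eq_or_ne i k with h | h
      · simp only [if_pos h]
        have := mnorm_pos (i - k)
        positivity
      · rw [if_neg h]
        calc |a i k| ≤ D₁ * mnorm k ^ (r:ℝ) / mnorm (i - k) ^ (s - r) := ha i k h
          _ = c * mnorm (i - k) ^ (-(s - r)) := by
              rw [Real.rpow_neg (mnorm_pos _).le, div_eq_mul_inv]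
    have hnonneg : ∀ i : Fin d → ℤ, 0 ≤ (if i = k then 0 else |a i k|) := by
      intro i
      rcases eq_or_ne i k with h | h
      · simp [h]
      · rw [if_neg h]; exact abs_nonneg _
    have hsum : Summable (fun i : Fin d → ℤ => if i = k then 0 else |a i k|) :=
      hdomsum.of_nonneg_of_le hnonneg hle
    refine ⟨hsum, ?_⟩
    have htsum_dom : (∑' i : Fin d → ℤ, c * mnorm (i - k) ^ (-(s - r))) = c * S := by
      rw [tsum_mul_left]
      congr 1
      exact (Equiv.subRight k).tsum_eq (fun m : Fin d → ℤ => mnorm m ^ (-(s - r)))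
    calc (∑' i : Fin d → ℤ, if i = k then 0 else |a i k|)
        ≤ (∑' i : Fin d → ℤ, c * mnorm (i - k) ^ (-(s - r))) :=
          Summable.tsum_le_tsum hle hsum hdomsum
      _ = c * S := htsum_dom
      _ = D₁ * S * mnorm k ^ (r:ℝ) := by rw [hcdef]; ring
  refine ⟨fun k => ⟨(hcol k).1, (hcol k).2⟩, ?_⟩
  intro k
  have hbound : a k k + (∑' i : Fin d → ℤ, if i = k then 0 else |a i k|) ≤
      -lam k + C * mnorm k ^ (r:ℝ) := by
    have h1 := hdiag k
    have h2 := (hcol k).2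
    have : C * mnorm k ^ (r:ℝ) = D₁ * mnorm k ^ (r:ℝ) + D₁ * S * mnorm k ^ (r:ℝ) := by
      rw [hCdef]; ring
    linarith
  refine hbound.trans ?_
  by_cases hk : znorm k ≤ K
  · exact (hM k hk).trans (le_max_left _ _)
  · push_neg at hk
    have hlamk : Ls * znorm k ^ p ≤ lam k := hlam k hk
    rcases eq_or_ne k 0 with hk0 | hk0
    · subst hk0
      have hz : znorm (0 : Fin d → ℤ) = 0 := by
        have h0 : (fun i => ((0 : Fin d → ℤ) i : ℝ)) = 0 := funext fun i => by simp
        rw [znorm, h0, norm_zero]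
      have hm1 : mnorm (0 : Fin d → ℤ) = 1 := by simp [mnorm]
      have hlam0 : 0 ≤ lam 0 := by
        have : Ls * znorm (0 : Fin d → ℤ) ^ p = 0 := by
          rw [hz, Real.zero_rpow hp0.ne', mul_zero]
        linarith [hlamk, this]
      have : -lam 0 + C * mnorm (0 : Fin d → ℤ) ^ (r:ℝ) ≤ C := by
        rw [hm1, Real.one_rpow, mul_one]
        linarith
      exact this.trans ((le_max_left C _).trans (le_max_right M _))
    · set t := znorm k with htdef
      have hmn : mnorm k = t := if_neg hk0
      have ht1 : (1:ℝ) ≤ t := by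
        have := one_le_mnorm k
        rwa [hmn] at this
      have ht0 : (0:ℝ) < t := lt_of_lt_of_le one_pos ht1
      rcases le_or_gt t T with hle | hlt
      · -- small t: bound by C * T^r
        have hlampos : 0 ≤ lam k := by
          have : 0 ≤ Ls * t ^ p := by positivity
          linarith
        have h1 : -lam k + C * mnorm k ^ (r:ℝ) ≤ C * t ^ (r:ℝ) := by
          rw [hmn]; linarith
        have h2 : C * t ^ (r:ℝ) ≤ C * T ^ (r:ℝ) :=
          mul_le_mul_of_nonneg_left (Real.rpow_le_rpow ht0.le hle hr0) hCpos.le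
        exact (h1.trans h2).trans ((le_max_right C _).trans (le_max_right M _))
      · -- large t: the diagonal term dominates
        have hpr : (0:ℝ) < p - r := by linarith
        have hCLs0 : (0:ℝ) ≤ C / Ls := by positivity
        have hTpow : C / Ls ≤ T ^ (p - (r:ℝ)) := by
          have h1 : ((C / Ls) ^ (1 / (p - (r:ℝ)))) ^ (p - (r:ℝ)) = C / Ls := by
            rw [← Real.rpow_mul hCLs0, one_div_mul_cancel hpr.ne', Real.rpow_one]
          calc C / Ls = ((C / Ls) ^ (1 / (p - (r:ℝ)))) ^ (p - (r:ℝ)) := h1.symm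
            _ ≤ T ^ (p - (r:ℝ)) :=
              Real.rpow_le_rpow (Real.rpow_nonneg hCLs0 _) (le_max_right _ _) hpr.le
        have htT : C / Ls ≤ t ^ (p - (r:ℝ)) :=
          hTpow.trans (Real.rpow_le_rpow (le_trans zero_le_one hT1) hlt.le hpr.le)
        have hkey : C * t ^ (r:ℝ) ≤ Ls * t ^ p := by
          have hsplit : t ^ p = t ^ (p - (r:ℝ)) * t ^ (r:ℝ) := by
            rw [← Real.rpow_add ht0, sub_add_cancel]
          rw [hsplit, ← mul_assoc]
          refine mul_le_mul_of_nonneg_right ?_ (Real.rpow_nonneg ht0.le _)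
          calc C = Ls * (C / Ls) := by field_simp
            _ ≤ Ls * t ^ (p - (r:ℝ)) := mul_le_mul_of_nonneg_left htT hLs.le
        have hfinal : -lam k + C * mnorm k ^ (r:ℝ) ≤ 0 := by
          rw [hmn]; linarith
        exact hfinal.trans
          (le_trans hCpos.le ((le_max_left C _).trans (le_max_right M _)))
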